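/- For any prime p, the group of continuous group homomorphisms from Z_p^× to the additive group Z_p is a free Z_p-module of rank 1. In particular it is torsion-free as an abelian group. -/

import Mathlib

/-!
Put `q = p` for odd `p` and `q = 4` for `p = 2`. By the lifting-the-exponent lemma
`‖(1 + q) ^ n - 1‖ = ‖q‖ * ‖n‖`, so the continuous character `a ↦ (1 + q) ^ a` of `ℤ_[p]`
multiplies distances by `‖q‖`. As an isometry of the compact space `ℤ_[p]` is onto, this character
is an isomorphism of `ℤ_[p]` onto `1 + q ℤ_[p]`. With `m = p - 1` (resp. `m = 2`) every unit `x`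
satisfies `x ^ m = (1 + q) ^ (m * φ x)` for a unique `φ x`, and `φ` is the generator: a continuous
homomorphism `f` is determined on `(1 + q) ^ ℤ_[p]` by `f (1 + q)`, by density of `ℕ`, and
`m * f x = f (x ^ m)`.
-/

theorem Isometry.surjective_of_compactSpace {X : Type*} [MetricSpace X] [CompactSpace X]
    {f : X → X} (hf : Isometry f) : Function.Surjective f := by
  intro y
  by_contra hy
  obtain ⟨ε, hε, hball⟩ : ∃ ε > 0, Metric.ball y ε ⊆ (Set.range f)ᶜ :=
    Metric.isOpen_iff.1 (isCompact_range hf.continuous).isClosed.isOpen_compl y hy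
  have hiter (n : ℕ) : Isometry f^[n] := by
    induction n with
    | zero => exact isometry_id
    | succ n ih => rw [Function.iterate_succ']; exact hf.comp ih
  -- Along a convergent subsequence of the orbit of `y`, two terms `f^[a] y` and `f^[a + k + 1] y`
  -- are `ε`-close, hence so are `y` and `f^[k + 1] y ∈ range f`.
  obtain ⟨z, -, φ, hφ, hlim⟩ := isCompact_univ.tendsto_subseq (x := fun n ↦ f^[n] y)
    (fun _ ↦ Set.mem_univ _)
  obtain ⟨N, hN⟩ := Metric.cauchySeq_iff'.1 hlim.cauchySeq ε hε
  obtain ⟨k, hk⟩ := Nat.exists_eq_add_of_lt (hφ (Nat.lt_succ_self N))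
  have hclose : dist (f^[k + 1] y) y < ε := by
    have := hN (N + 1) N.le_succ
    rwa [Function.comp_apply, Function.comp_apply, hk, add_assoc, Function.iterate_add_apply,
      (hiter (φ N)).dist_eq] at this
  exact hball hclose ⟨f^[k] y, (Function.iterate_succ_apply' f k y).symm⟩

theorem map_pow_of_map_mul {M A : Type*} [Monoid M] [AddLeftCancelMonoid A] {f : M → A}
    (hf : ∀ x y, f (x * y) = f x + f y) (x : M) (n : ℕ) : f (x ^ n) = n • f x := by
  induction n with
  | zero => simpa using hf 1 1
  | succ n ih => rw [pow_succ, hf, ih, succ_nsmul]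

namespace PadicInt

variable {p : ℕ} [Fact p.Prime]

theorem dvd_of_norm_le {x y : ℤ_[p]} (h : ‖x‖ ≤ ‖y‖) : y ∣ x := by
  rcases eq_or_ne y 0 with rfl | hy
  · simp_all
  have hy' : (y : ℚ_[p]) ≠ 0 := by simpa using hy
  refine ⟨⟨(x : ℚ_[p]) / y, ?_⟩, Subtype.ext ?_⟩
  · rw [norm_div]
    exact div_le_one_of_le₀ h (norm_nonneg _)
  · change (x : ℚ_[p]) = y * (x / y)
    rw [mul_div_cancel₀ _ hy']

theorem norm_intCast_eq_of_emultiplicity_eq {a b : ℤ}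
    (h : emultiplicity (p : ℤ) a = emultiplicity (p : ℤ) b) :
    ‖(a : ℤ_[p])‖ = ‖(b : ℤ_[p])‖ := by
  have hab : a = 0 ↔ b = 0 := by
    simp only [← padicValRat.finite_int_prime_iff (p := p), not_iff_not.symm,
      ← emultiplicity_eq_top, h]
  rcases eq_or_ne a 0 with rfl | ha
  · simp [hab.1 rfl]
  have hb := hab.not.1 ha
  have hnorm (z : ℤ) : ‖(z : ℤ_[p])‖ = padicNorm p z := by
    rw [norm_intCast_eq_padic_norm, ← Padic.eq_padicNorm]; norm_cast
  have hv : padicValRat p a = padicValRat p b := by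
    rw [padicValRat.of_int_multiplicity (Fact.out : p.Prime).ne_one ha,
      padicValRat.of_int_multiplicity (Fact.out : p.Prime).ne_one hb, multiplicity,
      multiplicity, h]
  rw [hnorm, hnorm, padicNorm.eq_zpow_of_nonzero (by exact_mod_cast ha),
    padicNorm.eq_zpow_of_nonzero (by exact_mod_cast hb), hv]

variable (p)

def principalModulus : ℕ := if p = 2 then 4 else p

theorem emultiplicity_one_add_principalModulus_pow_sub_one (n : ℕ) :
    emultiplicity (p : ℤ) ((1 + principalModulus p) ^ n - 1) =
      emultiplicity (p : ℤ) (principalModulus p * n) := by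
  have hp : p.Prime := Fact.out
  unfold principalModulus
  split_ifs with hp2
  · subst hp2
    have := Int.two_pow_sub_pow' (x := 5) (y := 1) n (by norm_num) (by norm_num)
    rw [one_pow] at this
    push_cast
    rw [emultiplicity_mul Int.prime_two, this]
    norm_num
  · have := Int.emultiplicity_pow_sub_pow hp (hp.odd_of_ne_two hp2) (x := 1 + p) (y := 1)
      (by simp) (by simpa [Int.dvd_add_left (dvd_refl (p : ℤ))] using
        Int.natCast_dvd_natCast.not.2 hp.not_dvd_one) n
    rw [one_pow, add_sub_cancel_left] at this
    rw [emultiplicity_mul (Nat.prime_iff_prime_int.1 hp), this, Int.natCast_emultiplicity p n]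

theorem norm_one_add_principalModulus_pow_sub_one (n : ℕ) :
    ‖(1 + principalModulus p : ℤ_[p]) ^ n - 1‖ =
      ‖(principalModulus p : ℤ_[p])‖ * ‖(n : ℤ_[p])‖ := by
  have := norm_intCast_eq_of_emultiplicity_eq
    (emultiplicity_one_add_principalModulus_pow_sub_one p n)
  push_cast at this
  rwa [norm_mul] at this

theorem norm_principalModulus_lt_one : ‖(principalModulus p : ℤ_[p])‖ < 1 := by
  rw [norm_natCast_lt_one_iff, principalModulus]
  split_ifs with hp2
  · subst hp2; norm_num
  · rfl

theorem principalModulus_ne_zero : (principalModulus p : ℤ_[p]) ≠ 0 := by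
  rw [Nat.cast_ne_zero, principalModulus]
  split_ifs
  · norm_num
  · exact (Fact.out : p.Prime).ne_zero

noncomputable def principalChar : AddChar ℤ_[p] ℤ_[p] :=
  addChar_of_value_at_one (principalModulus p : ℤ_[p])
    (tendsto_pow_atTop_nhds_zero_of_norm_lt_one (norm_principalModulus_lt_one p))

@[fun_prop]
theorem continuous_principalChar : Continuous (principalChar p) :=
  continuous_addChar_of_value_at_one _

theorem principalChar_natCast (n : ℕ) :
    principalChar p n = (1 + principalModulus p : ℤ_[p]) ^ n := by
  rw [← nsmul_one, AddChar.map_nsmul_eq_pow, principalChar, addChar_of_value_at_one_def]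

noncomputable def principalUnit (a : ℤ_[p]) : ℤ_[p]ˣ where
  val := principalChar p a
  inv := principalChar p (-a)
  val_inv := by rw [← AddChar.map_add_eq_mul, add_neg_cancel, AddChar.map_zero_eq_one]
  inv_val := by rw [← AddChar.map_add_eq_mul, neg_add_cancel, AddChar.map_zero_eq_one]

@[simp]
theorem val_principalUnit (a : ℤ_[p]) : (principalUnit p a : ℤ_[p]) = principalChar p a := rfl

theorem principalUnit_add (a b : ℤ_[p]) :
    principalUnit p (a + b) = principalUnit p a * principalUnit p b :=
  Units.ext (AddChar.map_add_eq_mul _ a b)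

theorem principalUnit_nsmul (n : ℕ) (a : ℤ_[p]) :
    principalUnit p (n • a) = principalUnit p a ^ n :=
  Units.ext (AddChar.map_nsmul_eq_pow _ n a)

theorem continuous_principalUnit : Continuous (principalUnit p) :=
  Units.continuous_iff.2
    ⟨continuous_principalChar p, (continuous_principalChar p).comp continuous_neg⟩

theorem norm_principalChar_sub_one (a : ℤ_[p]) :
    ‖principalChar p a - 1‖ = ‖(principalModulus p : ℤ_[p])‖ * ‖a‖ := by
  refine congrFun (denseRange_natCast.equalizer (g := fun a ↦ ‖principalChar p a - 1‖)
    (h := fun a ↦ ‖(principalModulus p : ℤ_[p])‖ * ‖a‖) (by fun_prop) (by fun_prop)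
    (funext fun n ↦ ?_)) a
  simp only [Function.comp_apply, principalChar_natCast,
    norm_one_add_principalModulus_pow_sub_one]

theorem norm_principalChar_sub (a b : ℤ_[p]) :
    ‖principalChar p a - principalChar p b‖ = ‖(principalModulus p : ℤ_[p])‖ * ‖a - b‖ := by
  have : principalChar p a - principalChar p b =
      principalChar p b * (principalChar p (a - b) - 1) := by
    rw [mul_sub, mul_one, ← AddChar.map_add_eq_mul, add_sub_cancel]
  rw [this, norm_mul, ← val_principalUnit, norm_units, one_mul, norm_principalChar_sub_one]

theorem principalChar_injective : Function.Injective (principalChar p) := fun a b h ↦ by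
  have := norm_principalChar_sub p a b
  rw [h, sub_self, norm_zero, eq_comm, mul_eq_zero, norm_eq_zero, norm_eq_zero,
    sub_eq_zero] at this
  exact this.resolve_left (principalModulus_ne_zero p)

theorem principalUnit_injective : Function.Injective (principalUnit p) :=
  fun _ _ h ↦ principalChar_injective p (congrArg Units.val h)

theorem exists_principalChar_eq {u : ℤ_[p]} (hu : (principalModulus p : ℤ_[p]) ∣ u - 1) :
    ∃ a, principalChar p a = u := by
  have hq := principalModulus_ne_zero p
  have hdvd (a : ℤ_[p]) : (principalModulus p : ℤ_[p]) ∣ principalChar p a - 1 :=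
    dvd_of_norm_le <| by
      rw [norm_principalChar_sub_one]
      exact mul_le_of_le_one_right (norm_nonneg _) (norm_le_one a)
  choose T hT using hdvd
  have hiso : Isometry T := Isometry.of_dist_eq fun a b ↦ by
    have := norm_principalChar_sub p a b
    rw [← sub_sub_sub_cancel_right _ _ 1, hT a, hT b, ← mul_sub, norm_mul] at this
    rw [dist_eq_norm, dist_eq_norm]
    exact mul_left_cancel₀ (norm_ne_zero_iff.2 hq) this
  obtain ⟨c, hc⟩ := hu
  obtain ⟨a, ha⟩ := hiso.surjective_of_compactSpace c
  exact ⟨a, by linear_combination hT a + (principalModulus p : ℤ_[p]) * ha - hc⟩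

variable {p} in
theorem natCast_dvd_pow_pred_sub_one (x : ℤ_[p]ˣ) :
    (p : ℤ_[p]) ∣ (x : ℤ_[p]) ^ (p - 1) - 1 := by
  have hx : toZMod (x : ℤ_[p]) ≠ 0 := ((Units.isUnit x).map toZMod).ne_zero
  rw [← Ideal.mem_span_singleton, ← maximalIdeal_eq_span_p, ← ker_toZMod, RingHom.mem_ker,
    map_sub, map_pow, map_one, ZMod.pow_card_sub_one_eq_one hx, sub_self]

theorem four_dvd_sub_one_or_add_one (x : ℤ_[2]ˣ) :
    (4 : ℤ_[2]) ∣ (x : ℤ_[2]) - 1 ∨ (4 : ℤ_[2]) ∣ (x : ℤ_[2]) + 1 := by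
  have h4 : (4 : ℤ_[2]) = ((2 : ℕ) : ℤ_[2]) ^ 2 := by norm_num
  have hunits : ∀ v : (ZMod (2 ^ 2))ˣ, v = 1 ∨ v = -1 := by decide
  simp only [h4, ← Ideal.mem_span_singleton, ← ker_toZModPow, RingHom.mem_ker, map_sub, map_add,
    map_one, sub_eq_zero, add_eq_zero_iff_eq_neg]
  rcases hunits (Units.map (toZModPow 2 : ℤ_[2] →+* ZMod (2 ^ 2)).toMonoidHom x) with h | h
  · exact .inl (by simpa using congrArg Units.val h)
  · exact .inr (by simpa using congrArg Units.val h)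

def torsionOrder : ℕ := if p = 2 then 2 else p - 1

theorem natCast_torsionOrder_ne_zero : (torsionOrder p : ℤ_[p]) ≠ 0 := by
  have := (Fact.out : p.Prime).two_le
  rw [Nat.cast_ne_zero, torsionOrder]
  split_ifs <;> omega

theorem exists_pow_torsionOrder_eq (x : ℤ_[p]ˣ) :
    ∃ a, x ^ torsionOrder p = principalUnit p (torsionOrder p * a) := by
  simp only [Units.ext_iff, Units.val_pow_eq_pow_val, val_principalUnit]
  unfold torsionOrder
  split_ifs with hp2
  · subst hp2
    -- `x` or `-x` is `principalChar 2 a`, and then `x ^ 2 = principalChar 2 (2 * a)`.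
    have hsq (a : ℤ_[2]) : principalChar 2 ((2 : ℕ) * a) = principalChar 2 a ^ 2 := by
      rw [← nsmul_eq_mul, AddChar.map_nsmul_eq_pow]
    have hq : ((principalModulus 2 : ℕ) : ℤ_[2]) = 4 := by norm_num [principalModulus]
    rcases four_dvd_sub_one_or_add_one x with h | h
    · obtain ⟨a, ha⟩ := exists_principalChar_eq 2 (hq ▸ h)
      exact ⟨a, by rw [hsq, ha]⟩
    · obtain ⟨a, ha⟩ := exists_principalChar_eq 2 (u := -x)
        (by rw [hq, ← dvd_neg]; convert h using 1; ring)
      exact ⟨a, by rw [hsq, ha, neg_sq]⟩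
  · have hq : ((principalModulus p : ℕ) : ℤ_[p]) = p := by simp [principalModulus, hp2]
    obtain ⟨b, hb⟩ := exists_principalChar_eq p (hq ▸ natCast_dvd_pow_pred_sub_one x)
    obtain ⟨c, hc⟩ := (isUnit_iff.2 (norm_natCast_p_sub_one (p := p))).exists_right_inv
    exact ⟨c * b, by rw [← mul_assoc, hc, one_mul, hb]⟩

/-- `log_p x / log_p (1 + q)`. -/
noncomputable def unitsLog (x : ℤ_[p]ˣ) : ℤ_[p] := (exists_pow_torsionOrder_eq p x).choose

theorem pow_torsionOrder_eq_principalUnit_unitsLog (x : ℤ_[p]ˣ) :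
    x ^ torsionOrder p = principalUnit p (torsionOrder p * unitsLog p x) :=
  (exists_pow_torsionOrder_eq p x).choose_spec

theorem unitsLog_mul (x y : ℤ_[p]ˣ) : unitsLog p (x * y) = unitsLog p x + unitsLog p y := by
  refine mul_left_cancel₀ (natCast_torsionOrder_ne_zero p) (principalUnit_injective p ?_)
  simp only [mul_add, principalUnit_add, ← pow_torsionOrder_eq_principalUnit_unitsLog, mul_pow]

theorem unitsLog_principalUnit (a : ℤ_[p]) : unitsLog p (principalUnit p a) = a := by
  refine mul_left_cancel₀ (natCast_torsionOrder_ne_zero p) (principalUnit_injective p ?_)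
  rw [← pow_torsionOrder_eq_principalUnit_unitsLog, ← nsmul_eq_mul, principalUnit_nsmul]

theorem continuous_unitsLog : Continuous (unitsLog p) := by
  have hchar := (continuous_principalChar p).isClosedEmbedding (principalChar_injective p)
  have hmul := (continuous_const_mul (torsionOrder p : ℤ_[p])).isClosedEmbedding
    (mul_right_injective₀ (natCast_torsionOrder_ne_zero p))
  rw [hmul.continuous_iff, hchar.continuous_iff]
  convert Units.continuous_val.comp (continuous_pow (M := ℤ_[p]ˣ) (torsionOrder p)) using 1
  ext x
  simp [pow_torsionOrder_eq_principalUnit_unitsLog]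

variable {p}

theorem apply_principalUnit {f : ℤ_[p]ˣ → ℤ_[p]} (hf : Continuous f)
    (hmul : ∀ x y, f (x * y) = f x + f y) (a : ℤ_[p]) :
    f (principalUnit p a) = a * f (principalUnit p 1) := by
  refine congrFun (denseRange_natCast.equalizer (g := fun a ↦ f (principalUnit p a))
    (h := fun a ↦ a * f (principalUnit p 1)) (hf.comp (continuous_principalUnit p))
    (continuous_mul_const _) (funext fun n ↦ ?_)) a
  simp only [Function.comp_apply]
  rw [← nsmul_one, principalUnit_nsmul, map_pow_of_map_mul hmul, smul_mul_assoc, one_mul]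

theorem apply_eq_mul_unitsLog {f : ℤ_[p]ˣ → ℤ_[p]} (hf : Continuous f)
    (hmul : ∀ x y, f (x * y) = f x + f y) (x : ℤ_[p]ˣ) :
    f x = f (principalUnit p 1) * unitsLog p x := by
  have := congrArg f (pow_torsionOrder_eq_principalUnit_unitsLog p x)
  rw [map_pow_of_map_mul hmul, apply_principalUnit hf hmul, nsmul_eq_mul] at this
  exact mul_left_cancel₀ (natCast_torsionOrder_ne_zero p) (by rw [this]; ring)

end PadicInt

/-- For any prime `p`, the group of continuous homomorphisms from the multiplicative group
`ℤ_pˣ` to the additive group `ℤ_p` is a free `ℤ_p`-module of rank 1: there is a continuous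
homomorphism `φ` such that every continuous homomorphism is a unique `ℤ_p`-multiple of `φ`.
In particular this group is torsion-free. -/
theorem continuousHom_padicUnits_to_padicInt_free_rank_one (p : ℕ) [Fact p.Prime] :
    (∃ φ : ℤ_[p]ˣ → ℤ_[p],
      (Continuous φ ∧ ∀ x y : ℤ_[p]ˣ, φ (x * y) = φ x + φ y) ∧
      ∀ f : ℤ_[p]ˣ → ℤ_[p],
        (Continuous f ∧ ∀ x y : ℤ_[p]ˣ, f (x * y) = f x + f y) →
          ∃! c : ℤ_[p], f = fun x => c * φ x) ∧
    ∀ f : ℤ_[p]ˣ → ℤ_[p],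
      (Continuous f ∧ ∀ x y : ℤ_[p]ˣ, f (x * y) = f x + f y) →
        ∀ n : ℕ, n ≠ 0 → (∀ x, (n : ℤ_[p]) * f x = 0) → ∀ x, f x = 0 := by
  refine ⟨⟨PadicInt.unitsLog p, ⟨PadicInt.continuous_unitsLog p, PadicInt.unitsLog_mul p⟩,
    fun f ⟨hf, hmul⟩ ↦ ⟨f (PadicInt.principalUnit p 1),
      funext (PadicInt.apply_eq_mul_unitsLog hf hmul), fun c hc ↦ ?_⟩⟩, ?_⟩
  · simpa [PadicInt.unitsLog_principalUnit] using (congrFun hc (PadicInt.principalUnit p 1)).symm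
  · exact fun f _ n hn h x ↦ (mul_eq_zero.1 (h x)).resolve_left (Nat.cast_ne_zero.2 hn)
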